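/- arXiv:1611.07016 — 2 statements merged into one kernel-verified Lean document; each statement's English description precedes it below -/
import Mathlib

section
/- Let N1, N2, k1, k2 be positive reals, and set dp1 = (N1/2)*k1, dq1 = N1/(2*k1), dp2 = (N2/2)*k2, dq2 = N2/(2*k2). If N1/2 + N2/2 = sqrt((dp1 + dp2)*(dq1 + dq2)), then k1 = k2. -/
/-! The defect in the Cauchy–Schwarz inequality
`(a k₁ + b k₂)(a / k₁ + b / k₂) ≥ (a + b)²` is `a b (k₁ - k₂)² / (k₁ k₂)`, so additivity of proper
time forces `k₁ = k₂`. -/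

lemma mul_add_mul_mul_div_add_div {a b k₁ k₂ : ℝ} (hk₁ : k₁ ≠ 0) (hk₂ : k₂ ≠ 0) :
    (a * k₁ + b * k₂) * (a / k₁ + b / k₂) = (a + b) ^ 2 + a * b * (k₁ - k₂) ^ 2 / (k₁ * k₂) := by
  field_simp
  ring

lemma eq_of_mul_add_mul_mul_div_add_div_eq_sq {a b k₁ k₂ : ℝ} (ha : a ≠ 0) (hb : b ≠ 0)
    (hk₁ : k₁ ≠ 0) (hk₂ : k₂ ≠ 0) (h : (a * k₁ + b * k₂) * (a / k₁ + b / k₂) = (a + b) ^ 2) :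
    k₁ = k₂ := by
  rw [mul_add_mul_mul_div_add_div hk₁ hk₂, add_eq_left] at h
  simpa [ha, hb, hk₁, hk₂, sub_eq_zero] using h

theorem stmt5 (N1 N2 k1 k2 : ℝ) (hN1 : 0 < N1) (hN2 : 0 < N2)
    (hk1 : 0 < k1) (hk2 : 0 < k2)
    (dp1 dq1 dp2 dq2 : ℝ)
    (hdp1 : dp1 = (N1 / 2) * k1) (hdq1 : dq1 = N1 / (2 * k1))
    (hdp2 : dp2 = (N2 / 2) * k2) (hdq2 : dq2 = N2 / (2 * k2))
    (hadd : N1 / 2 + N2 / 2 = Real.sqrt ((dp1 + dp2) * (dq1 + dq2))) :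
    k1 = k2 := by
  rw [← div_div] at hdq1 hdq2
  subst hdp1 hdq1 hdp2 hdq2
  refine eq_of_mul_add_mul_mul_div_add_div_eq_sq (a := N1 / 2) (b := N2 / 2)
    (by positivity) (by positivity) hk1.ne' hk2.ne' ?_
  rw [hadd, Real.sq_sqrt (by positivity)]
end

section
/- Let N_A, N_B be positive reals and k_A, k_B > 0 satisfy both (N_A+1)/2 * k_A = N_B/2 * k_B and (N_A/2)*(1/k_A) = ((N_B+1)/2)*(1/k_B). Define k_A' = ((N_A+1)/N_A) k_A, k_B' = (N_B/(N_B+1)) k_B, and for each particle X define E_X = k_X + 1/k_X and P_X = k_X - 1/k_X (similarly with primes). Then E_A' + E_B' = E_A + E_B and P_A' + P_B' = P_A + P_B. -/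
/-!
Multiplying the two compatibility constraints gives `N_A (N_A + 1) = N_B (N_B + 1)`, hence
`N_A = N_B`. With equal numbers the update rules simply exchange the two rates,
`k_A' = k_B` and `k_B' = k_A`, so every sum of the form `f k_A + f k_B` is conserved.
-/

theorem eq_of_mul_add_one_eq_mul_add_one {R : Type*} [Field R] [LinearOrder R]
    [IsStrictOrderedRing R] {a b : R} (ha : 0 ≤ a) (hb : 0 ≤ b)
    (h : a * (a + 1) = b * (b + 1)) : a = b := by
  have hfactor : (a - b) * (a + b + 1) = 0 := by linear_combination h
  have hpos : a + b + 1 ≠ 0 := by positivity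
  exact sub_eq_zero.mp ((mul_eq_zero.mp hfactor).resolve_right hpos)

theorem eq_of_rate_constraints {NA NB kA kB : ℝ} (hNA : 0 ≤ NA) (hNB : 0 ≤ NB)
    (hkA : kA ≠ 0) (hkB : kB ≠ 0)
    (hc1 : (NA + 1) * kA = NB * kB) (hc2 : NA * kB = (NB + 1) * kA) : NA = NB := by
  refine eq_of_mul_add_one_eq_mul_add_one hNA hNB (mul_right_cancel₀ (mul_ne_zero hkA hkB) ?_)
  linear_combination (NA * kB) * hc1 + (NB * kB) * hc2

theorem stmt16 (NA NB kA kB : ℝ) (hNA : 0 < NA) (hNB : 0 < NB)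
    (hkA : 0 < kA) (hkB : 0 < kB)
    (hcon1 : (NA + 1) / 2 * kA = NB / 2 * kB)
    (hcon2 : (NA / 2) * (1 / kA) = ((NB + 1) / 2) * (1 / kB))
    (kA' kB' : ℝ) (hkA' : kA' = ((NA + 1) / NA) * kA)
    (hkB' : kB' = (NB / (NB + 1)) * kB) :
    (kA' + 1 / kA') + (kB' + 1 / kB') = (kA + 1 / kA) + (kB + 1 / kB) ∧
    (kA' - 1 / kA') + (kB' - 1 / kB') = (kA - 1 / kA) + (kB - 1 / kB) := by
  have hc1 : (NA + 1) * kA = NB * kB := by linarith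
  have hc2 : NA * kB = (NB + 1) * kA := by
    field_simp at hcon2
    linarith
  obtain rfl : NA = NB := eq_of_rate_constraints hNA.le hNB.le hkA.ne' hkB.ne' hc1 hc2
  have hswapA : kA' = kB := by
    rw [hkA', div_mul_eq_mul_div, hc1, mul_div_cancel_left₀ _ hNA.ne']
  have hswapB : kB' = kA := by
    rw [hkB', div_mul_eq_mul_div, hc2, mul_div_cancel_left₀ _ (by positivity)]
  subst hswapA hswapB
  exact ⟨add_comm _ _, add_comm _ _⟩
end
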